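/- Let K ≥ 1, let u^{(1)}, …, u^{(K)} ∈ ℝ^n, and define F : 𝒞_n → ℝ by F(x) = Π_{k=1}^K ⟨u^{(k)}, x⟩². Then the derivative matrix of F satisfies ‖D^F‖_op ≤ 2K(2K−1) n^{K−1} Π_{k=1}^K ‖u^{(k)}‖₂². -/

import Mathlib

noncomputable section

open scoped BigOperators

/-- The point of the Boolean hypercube associated with a Boolean string. -/
def sgnVec {n : ℕ} (b : Fin n → Bool) : Fin n → ℝ := fun i => if b i then 1 else -1

/-- Euclidean inner product on ℝ^n. -/
def dotR {n : ℕ} (u x : Fin n → ℝ) : ℝ := ∑ i, u i * x i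

/-- Discrete derivative on the cube: `∂_i F(x) = (F(x^{i+}) − F(x^{i−}))/2`. -/
def dderiv {n : ℕ} (F : (Fin n → Bool) → ℝ) (i : Fin n) (b : Fin n → Bool) : ℝ :=
  (F (Function.update b i true) - F (Function.update b i false)) / 2

/-- The derivative matrix `D^F_{ij} = max_x |∂_i ∂_j F(x)|`. -/
def derivMat {n : ℕ} (F : (Fin n → Bool) → ℝ) (i j : Fin n) : ℝ :=
  ⨆ b : Fin n → Bool, |dderiv (dderiv F j) i b|

/-- The `ℓ²→ℓ²` operator norm of an `n×n` matrix. -/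
def matOpNorm {n : ℕ} (M : Fin n → Fin n → ℝ) : ℝ :=
  sSup { r : ℝ | ∃ x : Fin n → ℝ, (∑ i, x i ^ 2) = 1 ∧
    r = Real.sqrt (∑ i, (∑ j, M i j * x j) ^ 2) }

/-!
Write `g_k(x) = ⟨u^{(k)}, x⟩`. On the cube `|g_k| ≤ √n ‖u^{(k)}‖`, flipping `x_i` changes `g_k`
by `2 u^{(k)}_i`, and so the mixed second difference of `g_k²` in directions `i ≠ j` is
`8 u^{(k)}_i u^{(k)}_j`. A discrete second-order Leibniz rule for products then bounds
`|∂_i ∂_j F|` entrywise by `∑_{k,m} c_{km} |u^{(k)}_i| |u^{(m)}_j|`: the terms `k = m` come from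
both differences hitting the same factor, those with `k ≠ m` from hitting two different factors.
The operator norm is at most the Frobenius norm, and by the triangle inequality the Frobenius norm
of this sum of rank-one matrices is at most `∑_{k,m} c_{km} ‖u^{(k)}‖ ‖u^{(m)}‖`, which equals
`(2K + 4K(K-1)) n^{K-1} ∏_k ‖u^{(k)}‖²`.
-/

open Finset Function

section ProductRule

variable {ι : Type*} [DecidableEq ι]

theorem sum_mul_prod_erase_insert {R : Type*} [CommSemiring R] {s : Finset ι} {a : ι}
    (ha : a ∉ s) (P M : ι → R) :
    ∑ k ∈ insert a s, P k * ∏ l ∈ (insert a s).erase k, M l =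
      P a * ∏ l ∈ s, M l + M a * ∑ k ∈ s, P k * ∏ l ∈ s.erase k, M l := by
  rw [sum_insert ha, erase_insert ha, mul_sum]
  congr 1
  refine sum_congr rfl fun k hk => ?_
  rw [erase_insert_of_ne (ne_of_mem_of_not_mem hk ha).symm,
    prod_insert fun h => ha (mem_of_mem_erase h)]
  ring

theorem sum_mul_sum_mul_prod_erase_insert {R : Type*} [CommSemiring R] {s : Finset ι} {a : ι}
    (ha : a ∉ s) (P Q M : ι → R) :
    ∑ k ∈ insert a s, P k *
        ∑ m ∈ (insert a s).erase k, Q m * ∏ l ∈ ((insert a s).erase k).erase m, M l =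
      P a * ∑ m ∈ s, Q m * ∏ l ∈ s.erase m, M l + Q a * ∑ k ∈ s, P k * ∏ l ∈ s.erase k, M l +
        M a * ∑ k ∈ s, P k * ∑ m ∈ s.erase k, Q m * ∏ l ∈ (s.erase k).erase m, M l := by
  rw [sum_insert ha, erase_insert ha, add_assoc]
  congr 1
  rw [mul_sum, mul_sum, ← sum_add_distrib]
  refine sum_congr rfl fun k hk => ?_
  rw [erase_insert_of_ne (ne_of_mem_of_not_mem hk ha).symm,
    sum_mul_prod_erase_insert fun h => ha (mem_of_mem_erase h)]
  ring

theorem abs_prod_sub_prod_le (s : Finset ι) (f g M P : ι → ℝ)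
    (hf : ∀ k ∈ s, |f k| ≤ M k) (hg : ∀ k ∈ s, |g k| ≤ M k)
    (hfg : ∀ k ∈ s, |f k - g k| ≤ P k) :
    |∏ k ∈ s, f k - ∏ k ∈ s, g k| ≤ ∑ k ∈ s, P k * ∏ l ∈ s.erase k, M l := by
  induction s using Finset.induction with
  | empty => simp
  | insert a s ha ih =>
    simp only [mem_insert, forall_eq_or_imp] at hf hg hfg
    have hg_prod : |∏ k ∈ s, g k| ≤ ∏ k ∈ s, M k := by
      rw [abs_prod]; exact prod_le_prod (fun _ _ => abs_nonneg _) hg.2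
    rw [prod_insert ha, prod_insert ha, sum_mul_prod_erase_insert ha]
    calc |f a * ∏ k ∈ s, f k - g a * ∏ k ∈ s, g k|
        = |(f a - g a) * ∏ k ∈ s, g k + f a * (∏ k ∈ s, f k - ∏ k ∈ s, g k)| := by
          congr 1; ring
      _ ≤ _ := by
        refine (abs_add_le _ _).trans (add_le_add ?_ ?_) <;> rw [abs_mul]
        · exact mul_le_mul hfg.1 hg_prod (abs_nonneg _) ((abs_nonneg _).trans hfg.1)
        · exact mul_le_mul hf.1 (ih hf.2 hg.2 hfg.2) (abs_nonneg _) ((abs_nonneg _).trans hf.1)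

def mixedDiff (h : Bool → Bool → ℝ) : ℝ :=
  h true true - h true false - h false true + h false false

theorem mixedDiff_mul (f g : Bool → Bool → ℝ) :
    mixedDiff (f * g) = f true true * mixedDiff g + (f true true - f false true) *
      (g false true - g false false) + mixedDiff f * g true false +
        (f false true - f false false) * (g true false - g false false) := by
  simp only [mixedDiff, Pi.mul_apply]; ring

theorem abs_mixedDiff_prod_le (s : Finset ι) (h : ι → Bool → Bool → ℝ) (M P Q R : ι → ℝ)
    (hM : ∀ k ∈ s, ∀ ε δ, |h k ε δ| ≤ M k)
    (hP : ∀ k ∈ s, ∀ δ, |h k true δ - h k false δ| ≤ P k)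
    (hQ : ∀ k ∈ s, ∀ ε, |h k ε true - h k ε false| ≤ Q k)
    (hR : ∀ k ∈ s, |mixedDiff (h k)| ≤ R k) :
    |mixedDiff (∏ k ∈ s, h k)| ≤ ∑ k ∈ s, R k * ∏ l ∈ s.erase k, M l +
      ∑ k ∈ s, P k * ∑ m ∈ s.erase k, Q m * ∏ l ∈ (s.erase k).erase m, M l := by
  induction s using Finset.induction with
  | empty => simp [mixedDiff]
  | insert a s ha ih =>
    simp only [mem_insert, forall_eq_or_imp] at hM hP hQ hR
    have hM_prod : ∀ ε δ, |(∏ k ∈ s, h k) ε δ| ≤ ∏ k ∈ s, M k := fun ε δ => by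
      rw [Finset.prod_apply, Finset.prod_apply, abs_prod]
      exact prod_le_prod (fun _ _ => abs_nonneg _) fun k hk => hM.2 k hk ε δ
    have hP_prod : |(∏ k ∈ s, h k) true false - (∏ k ∈ s, h k) false false| ≤
        ∑ k ∈ s, P k * ∏ l ∈ s.erase k, M l := by
      simp only [Finset.prod_apply]
      exact abs_prod_sub_prod_le s _ _ M P (fun k hk => hM.2 k hk _ _)
        (fun k hk => hM.2 k hk _ _) fun k hk => hP.2 k hk _
    have hQ_prod : |(∏ k ∈ s, h k) false true - (∏ k ∈ s, h k) false false| ≤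
        ∑ k ∈ s, Q k * ∏ l ∈ s.erase k, M l := by
      simp only [Finset.prod_apply]
      exact abs_prod_sub_prod_le s _ _ M Q (fun k hk => hM.2 k hk _ _)
        (fun k hk => hM.2 k hk _ _) fun k hk => hQ.2 k hk _
    have hM0 : 0 ≤ M a := (abs_nonneg _).trans (hM.1 true true)
    have hP0 : 0 ≤ P a := (abs_nonneg _).trans (hP.1 true)
    have hQ0 : 0 ≤ Q a := (abs_nonneg _).trans (hQ.1 true)
    have hR0 : 0 ≤ R a := (abs_nonneg _).trans hR.1
    rw [prod_insert ha, mixedDiff_mul, sum_mul_prod_erase_insert ha,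
      sum_mul_sum_mul_prod_erase_insert ha]
    grw [abs_add_le, abs_add_le, abs_add_le, abs_mul, abs_mul, abs_mul, abs_mul, hM.1, hP.1,
      hR.1, hQ.1, ih hM.2 hP.2 hQ.2 hR.2, hM_prod, hP_prod, hQ_prod]
    linarith

end ProductRule

theorem mixedDiff_sq_of_sub_eq (G : Bool → Bool → ℝ) {A C : ℝ}
    (hA : ∀ δ, G true δ - G false δ = A) (hC : ∀ ε, G ε true - G ε false = C) :
    mixedDiff (G ^ 2) = 2 * A * C := by
  have htt : G true true = G false false + A + C := by linarith [hA true, hC false]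
  have htf : G true false = G false false + A := by linarith [hA false]
  have hft : G false true = G false false + C := by linarith [hC false]
  simp only [mixedDiff, Pi.pow_apply, htt, htf, hft]
  ring

theorem abs_sq_sub_sq_le {x y B : ℝ} (hx : |x| ≤ B) (hy : |y| ≤ B) :
    |x ^ 2 - y ^ 2| ≤ |x - y| * (2 * B) := by
  rw [sq_sub_sq, abs_mul, mul_comm]
  gcongr
  linarith [abs_add_le x y]

section Cube

variable {n : ℕ}

def cubeFace (F : (Fin n → Bool) → ℝ) (b : Fin n → Bool) (i j : Fin n) (ε δ : Bool) : ℝ :=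
  F (update (update b i ε) j δ)

theorem dderiv_dderiv_eq (F : (Fin n → Bool) → ℝ) (i j : Fin n) (b : Fin n → Bool) :
    dderiv (dderiv F j) i b = mixedDiff (cubeFace F b i j) / 4 := by
  simp only [dderiv, mixedDiff, cubeFace]; ring

theorem abs_derivMat_le {F : (Fin n → Bool) → ℝ} {i j : Fin n} {C : ℝ}
    (h : ∀ b, |dderiv (dderiv F j) i b| ≤ C) : |derivMat F i j| ≤ C := by
  rw [derivMat, abs_of_nonneg (Real.iSup_nonneg fun _ => abs_nonneg _)]
  exact ciSup_le h

theorem dotR_sgnVec_update_sub (u : Fin n → ℝ) (c : Fin n → Bool) (i : Fin n) :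
    dotR u (sgnVec (update c i true)) - dotR u (sgnVec (update c i false)) = 2 * u i := by
  simp only [dotR, ← sum_sub_distrib, ← mul_sub, sgnVec, update_apply]
  rw [sum_eq_single i (fun l _ hl => by simp [hl]) (by simp)]
  norm_num; ring

theorem abs_dotR_sgnVec_le (u : Fin n → ℝ) (c : Fin n → Bool) :
    |dotR u (sgnVec c)| ≤ √n * √(∑ i, u i ^ 2) := by
  have hsq : ∑ i, sgnVec c i ^ 2 = n := by simp [sgnVec, apply_ite (· ^ 2)]
  rw [← Real.sqrt_mul (Nat.cast_nonneg n), ← hsq, mul_comm]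
  exact Real.abs_le_sqrt (sum_mul_sq_le_sq_mul_sq _ _ _)

variable (u : Fin n → ℝ) (b : Fin n → Bool) (i j : Fin n)

theorem cubeFace_dotR_sub_left (δ : Bool) :
    cubeFace (fun c => dotR u (sgnVec c)) b i j true δ -
      cubeFace (fun c => dotR u (sgnVec c)) b i j false δ = if i = j then 0 else 2 * u i := by
  unfold cubeFace
  split_ifs with hij
  · simp [hij]
  · rw [update_comm hij, update_comm hij, dotR_sgnVec_update_sub]

theorem cubeFace_dotR_sub_right (ε : Bool) :
    cubeFace (fun c => dotR u (sgnVec c)) b i j ε true -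
      cubeFace (fun c => dotR u (sgnVec c)) b i j ε false = 2 * u j :=
  dotR_sgnVec_update_sub u _ j

theorem abs_cubeFace_dotR_sub_left_le (δ : Bool) :
    |cubeFace (fun c => dotR u (sgnVec c)) b i j true δ -
      cubeFace (fun c => dotR u (sgnVec c)) b i j false δ| ≤ 2 * |u i| := by
  rw [cubeFace_dotR_sub_left]; split_ifs <;> simp [abs_mul]

theorem abs_mixedDiff_cubeFace_dotR_sq_le :
    |mixedDiff (cubeFace (fun c => dotR u (sgnVec c)) b i j ^ 2)| ≤
      2 * (2 * |u i|) * (2 * |u j|) := by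
  rw [mixedDiff_sq_of_sub_eq _ (cubeFace_dotR_sub_left u b i j) (cubeFace_dotR_sub_right u b i j)]
  split_ifs
  · simp only [mul_zero, zero_mul, abs_zero]; positivity
  · simp [abs_mul]

end Cube

theorem sqrt_sum_sq_sum_le {ι κ : Type*} [Fintype κ] (s : Finset ι) (f : ι → κ → ℝ) :
    √(∑ q, (∑ p ∈ s, f p q) ^ 2) ≤ ∑ p ∈ s, √(∑ q, f p q ^ 2) := by
  simpa [EuclideanSpace.norm_eq, ← WithLp.toLp_sum, Finset.sum_apply] using
    norm_sum_le (E := EuclideanSpace ℝ κ) s fun p => WithLp.toLp 2 (f p)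

section OperatorNorm

variable {n : ℕ}

theorem matOpNorm_le_sqrt_sum_sq (M : Fin n → Fin n → ℝ) :
    matOpNorm M ≤ √(∑ i, ∑ j, M i j ^ 2) := by
  refine Real.sSup_le ?_ (Real.sqrt_nonneg _)
  rintro r ⟨x, hx, rfl⟩
  gcongr with i
  simpa [hx] using sum_mul_sq_le_sq_mul_sq univ (M i) x

theorem matOpNorm_le_of_abs_le_sum {ι : Type*} (s : Finset ι) (M : Fin n → Fin n → ℝ)
    (c : ι → ℝ) (a b : ι → Fin n → ℝ) (hc : ∀ p ∈ s, 0 ≤ c p)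
    (hM : ∀ i j, |M i j| ≤ ∑ p ∈ s, c p * |a p i| * |b p j|) :
    matOpNorm M ≤ ∑ p ∈ s, c p * √(∑ i, a p i ^ 2) * √(∑ j, b p j ^ 2) := by
  have hrank_one : ∀ p ∈ s, √(∑ q : Fin n × Fin n, (c p * |a p q.1| * |b p q.2|) ^ 2) =
      c p * √(∑ i, a p i ^ 2) * √(∑ j, b p j ^ 2) := fun p hp => by
    rw [Fintype.sum_prod_type]
    simp_rw [mul_pow, sq_abs, mul_assoc, ← mul_sum, ← sum_mul]
    rw [Real.sqrt_mul (sq_nonneg _), Real.sqrt_sq (hc p hp),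
      Real.sqrt_mul (sum_nonneg fun _ _ => sq_nonneg _)]
  calc matOpNorm M ≤ √(∑ i, ∑ j, M i j ^ 2) := matOpNorm_le_sqrt_sum_sq M
    _ ≤ √(∑ q : Fin n × Fin n, (∑ p ∈ s, c p * |a p q.1| * |b p q.2|) ^ 2) := by
      rw [Fintype.sum_prod_type]
      refine Real.sqrt_le_sqrt (sum_le_sum fun i _ => sum_le_sum fun j _ => ?_)
      exact sq_le_sq' (neg_le_of_abs_le (hM i j)) (le_of_abs_le (hM i j))
    _ ≤ _ := sqrt_sum_sq_sum_le s _
    _ = _ := sum_congr rfl hrank_one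

end OperatorNorm

theorem mul_prod_erase_const_mul {ι R : Type*} [DecidableEq ι] [CommMonoid R] {s : Finset ι}
    {k : ι} (hk : k ∈ s) (c : R) (x : ι → R) :
    x k * ∏ l ∈ s.erase k, c * x l = c ^ (#s - 1) * ∏ l ∈ s, x l := by
  rw [prod_mul_distrib, prod_const, card_erase_of_mem hk, mul_left_comm, mul_prod_erase s x hk]

section Majorant

variable {ι : Type*} [Fintype ι] [DecidableEq ι]

/-- The coefficients `c_{km}`, for factors bounded by `|g_l| ≤ B l`. -/
def majorantCoeff (B : ι → ℝ) (k m : ι) : ℝ :=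
  if k = m then 2 * ∏ l ∈ univ.erase k, B l ^ 2
  else 4 * B k * B m * ∏ l ∈ (univ.erase k).erase m, B l ^ 2

theorem majorantCoeff_nonneg {B : ι → ℝ} (hB : ∀ k, 0 ≤ B k) (k m : ι) :
    0 ≤ majorantCoeff B k m := by
  unfold majorantCoeff
  split_ifs
  · positivity
  · have := hB k; have := hB m; positivity

theorem sum_majorantCoeff_mul (B x y : ι → ℝ) (k : ι) :
    ∑ m, majorantCoeff B k m * x k * y m =
      2 * x k * y k * ∏ l ∈ univ.erase k, B l ^ 2 +
        4 * x k * B k * ∑ m ∈ univ.erase k, y m * B m * ∏ l ∈ (univ.erase k).erase m, B l ^ 2 := by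
  rw [← add_sum_erase _ _ (mem_univ k), mul_sum]
  congr 1
  · rw [majorantCoeff, if_pos rfl]; ring
  · refine sum_congr rfl fun m hm => ?_
    rw [majorantCoeff, if_neg (ne_of_mem_erase hm).symm]; ring

theorem sum_majorantCoeff_mul_self (r : ℝ) (s : ι → ℝ) (k : ι) :
    ∑ m, majorantCoeff (fun l => r * s l) k m * s k * s m =
      (4 * Fintype.card ι - 2) * (r ^ 2) ^ (Fintype.card ι - 1) * ∏ l, s l ^ 2 := by
  have hcard : #(univ.erase k) = Fintype.card ι - 1 := by
    rw [card_erase_of_mem (mem_univ k), card_univ]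
  have hdiag : s k ^ 2 * ∏ l ∈ univ.erase k, (r * s l) ^ 2 =
      (r ^ 2) ^ (Fintype.card ι - 1) * ∏ l, s l ^ 2 := by
    simp_rw [mul_pow]
    rw [mul_prod_erase_const_mul (mem_univ k) (r ^ 2) (s · ^ 2), card_univ]
  have hoff : r * ∑ m ∈ univ.erase k, s m * (r * s m) *
      ∏ l ∈ (univ.erase k).erase m, (r * s l) ^ 2 =
        (Fintype.card ι - 1 : ℕ) * ∏ l ∈ univ.erase k, (r * s l) ^ 2 := by
    rw [← hcard, ← nsmul_eq_mul, ← sum_const, mul_sum]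
    refine sum_congr rfl fun m hm => ?_
    rw [← mul_prod_erase _ _ hm]; ring
  rw [Nat.cast_pred (Fintype.card_pos_iff.mpr ⟨k⟩)] at hoff
  rw [sum_majorantCoeff_mul]
  linear_combination (4 * (Fintype.card ι - 1 : ℝ) + 2) * hdiag + 4 * s k ^ 2 * hoff

end Majorant

theorem abs_dderiv_dderiv_prod_sq_le {n K : ℕ} (u : Fin K → Fin n → ℝ) (i j : Fin n)
    (b : Fin n → Bool) :
    |dderiv (dderiv (fun c => ∏ k, dotR (u k) (sgnVec c) ^ 2) j) i b| ≤
      ∑ k, ∑ m, majorantCoeff (fun l => √n * √(∑ r, u l r ^ 2)) k m * |u k i| * |u m j| := by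
  let B : Fin K → ℝ := fun l => √n * √(∑ r, u l r ^ 2)
  let G : Fin K → Bool → Bool → ℝ := fun k => cubeFace (fun c => dotR (u k) (sgnVec c)) b i j
  have hG : ∀ k ε δ, |G k ε δ| ≤ B k := fun k _ _ => abs_dotR_sgnVec_le (u k) _
  have hprod := abs_mixedDiff_prod_le univ (fun k => G k ^ 2) (fun k => B k ^ 2)
    (fun k => 2 * |u k i| * (2 * B k)) (fun k => 2 * |u k j| * (2 * B k))
    (fun k => 2 * (2 * |u k i|) * (2 * |u k j|))
    (fun k _ ε δ => by
      simp only [Pi.pow_apply]; rw [abs_pow]; exact pow_le_pow_left₀ (abs_nonneg _) (hG k ε δ) 2)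
    (fun k _ δ => by
      simp only [Pi.pow_apply]
      grw [abs_sq_sub_sq_le (hG k _ _) (hG k _ _), abs_cubeFace_dotR_sub_left_le])
    (fun k _ ε => by
      simp only [Pi.pow_apply]
      grw [abs_sq_sub_sq_le (hG k _ _) (hG k _ _), cubeFace_dotR_sub_right, abs_mul]
      simp)
    (fun k _ => abs_mixedDiff_cubeFace_dotR_sq_le (u k) b i j)
  have hface : cubeFace (fun c => ∏ k, dotR (u k) (sgnVec c) ^ 2) b i j = ∏ k, G k ^ 2 := by
    ext ε δ; simp [cubeFace, G]
  rw [dderiv_dderiv_eq, hface, abs_div, abs_of_pos (four_pos : (0 : ℝ) < 4),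
    div_le_iff₀ four_pos]
  refine hprod.trans (le_of_eq ?_)
  rw [← sum_add_distrib, sum_mul]
  refine sum_congr rfl fun k _ => ?_
  have hinner : ∑ m ∈ univ.erase k, 2 * |u m j| * (2 * B m) *
      ∏ l ∈ (univ.erase k).erase m, B l ^ 2 =
        4 * ∑ m ∈ univ.erase k, |u m j| * B m * ∏ l ∈ (univ.erase k).erase m, B l ^ 2 := by
    rw [mul_sum]; exact sum_congr rfl fun _ _ => by ring
  rw [sum_majorantCoeff_mul B (|u · i|) (|u · j|), hinner]
  ring

theorem derivMat_product_general (n K : ℕ) (u : Fin K → Fin n → ℝ) :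
    matOpNorm (derivMat (fun b => ∏ k, dotR (u k) (sgnVec b) ^ 2)) ≤
      2 * K * (2 * K - 1) * (n : ℝ) ^ (K - 1) * ∏ k, (∑ i, u k i ^ 2) := by
  have hentry : ∀ i j, |derivMat (fun b => ∏ k, dotR (u k) (sgnVec b) ^ 2) i j| ≤
      ∑ p : Fin K × Fin K, majorantCoeff (fun l => √n * √(∑ r, u l r ^ 2)) p.1 p.2 *
        |u p.1 i| * |u p.2 j| := fun i j =>
    abs_derivMat_le fun b => by
      rw [Fintype.sum_prod_type]; exact abs_dderiv_dderiv_prod_sq_le u i j b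
  refine (matOpNorm_le_of_abs_le_sum univ _ _ (fun p : Fin K × Fin K => u p.1)
    (fun p => u p.2) (fun _ _ => majorantCoeff_nonneg (fun _ => by positivity) _ _) hentry).trans
    (le_of_eq ?_)
  simp only [Fintype.sum_prod_type, sum_majorantCoeff_mul_self, sum_const, card_univ,
    Fintype.card_fin, nsmul_eq_mul, Real.sq_sqrt (Nat.cast_nonneg n),
    Real.sq_sqrt (sum_nonneg fun _ _ => sq_nonneg _)]
  ring

/-- Derivative-matrix bound for `F(x) = ∏_{k=1}^K ⟨u^{(k)},x⟩²`
(Lemma `ext` of the paper). -/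
theorem derivMat_product (n K : ℕ) (hK : 1 ≤ K) (u : Fin K → Fin n → ℝ) :
    matOpNorm (derivMat (fun b => ∏ k, dotR (u k) (sgnVec b) ^ 2)) ≤
      2 * K * (2 * K - 1) * (n : ℝ) ^ (K - 1) * ∏ k, (∑ i, u k i ^ 2) :=
  derivMat_product_general n K u
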